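/- arXiv:2509.14193 — 2 statements merged into one kernel-verified Lean document; each statement's English description precedes it below -/
import Mathlib

section
/- An unsigned graph 𝒢 is the Gremban expansion of some signed graph if and only if it admits a fixed-point-free involutive automorphism η such that for every edge (u,v) of 𝒢 one has v ≠ η(u) and (u, η(v)) is not an edge of 𝒢. -/
/-- A signed graph: a simple graph together with a symmetric `±1`-valued sign function
on its edges. -/
structure SignedGraph (V : Type*) where
  G : SimpleGraph V
  sign : V → V → ℤ
  sign_symm : ∀ u v, sign u v = sign v u
  sign_pm : ∀ u v, G.Adj u v → sign u v = 1 ∨ sign u v = -1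

namespace SignedGraph

variable {V : Type*} (S : SignedGraph V)

/-- The Gremban expansion of a signed graph: each vertex `v` is doubled into the two
polarities `(v, true)` (positive) and `(v, false)` (negative); a positive edge lifts to
two edges between equal polarities, and a negative edge to two edges between opposite
polarities. -/
def gremban : SimpleGraph (V × Bool) where
  Adj x y := S.G.Adj x.1 y.1 ∧ ((x.2 = y.2) ↔ S.sign x.1 y.1 = 1)
  symm := by
    constructor
    rintro ⟨u, a⟩ ⟨v, b⟩ ⟨h, hs⟩
    refine ⟨h.symm, ?_⟩
    rw [S.sign_symm v u, eq_comm]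
    exact hs
  loopless := by
    constructor
    rintro ⟨u, a⟩ ⟨h, _⟩
    exact S.G.loopless.irrefl u h

/-- The Gremban involution, swapping the two polarities of every vertex. -/
def eta : V × Bool → V × Bool := fun x => (x.1, !x.2)

end SignedGraph


/-!
A signed graph is recovered from its Gremban expansion by reading off the vertex pairs
`{v⁺, v⁻}` as the orbits of the polarity swap, and the sign of an edge `uv` from whether `u⁺`
is joined to `v⁺` or to `v⁻`; the two conditions on edges say that exactly one of these
happens. Conversely, any fixed-point-free involution `η` splits the vertex set as
`W / η × Bool` by choosing one representative of every orbit, and under this splitting `η`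
becomes the polarity swap.
-/

namespace SimpleGraph

variable {W W' : Type*}

structure IsGrembanInvolution (G : SimpleGraph W) (η : W → W) : Prop where
  map_adj_iff : ∀ x y, G.Adj (η x) (η y) ↔ G.Adj x y
  involutive : Function.Involutive η
  apply_ne_self : ∀ x, η x ≠ x
  ne_apply_of_adj : ∀ {u v}, G.Adj u v → v ≠ η u
  not_adj_apply_of_adj : ∀ {u v}, G.Adj u v → ¬G.Adj u (η v)

namespace Iso

variable {G : SimpleGraph W} {H : SimpleGraph W'} {η : W → W} {η' : W' → W'}

theorem isGrembanInvolution_of_isGrembanInvolution (e : G ≃g H)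
    (he : ∀ x, e (η x) = η' (e x)) (hη' : H.IsGrembanInvolution η') :
    G.IsGrembanInvolution η where
  map_adj_iff x y := by
    rw [← e.map_adj_iff, he, he, hη'.map_adj_iff, e.map_adj_iff]
  involutive x := e.injective <| by rw [he, he, hη'.involutive]
  apply_ne_self x h := hη'.apply_ne_self (e x) <| by rw [← he, h]
  ne_apply_of_adj {u v} huv h :=
    hη'.ne_apply_of_adj (e.map_adj_iff.2 huv) <| by rw [← he, h]
  not_adj_apply_of_adj {u v} huv h :=
    hη'.not_adj_apply_of_adj (e.map_adj_iff.2 huv) <| by rw [← he, e.map_adj_iff]; exact h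

theorem isGrembanInvolution_iff (e : G ≃g H) (he : ∀ x, e (η x) = η' (e x)) :
    G.IsGrembanInvolution η ↔ H.IsGrembanInvolution η' := by
  refine ⟨e.symm.isGrembanInvolution_of_isGrembanInvolution fun y => ?_,
    e.isGrembanInvolution_of_isGrembanInvolution he⟩
  apply e.injective
  rw [he, e.apply_symm_apply, e.apply_symm_apply]

end Iso

end SimpleGraph

namespace Function.Involutive

variable {W : Type*} {η : W → W}

def orbitSetoid (hη : Involutive η) : Setoid W where
  r x y := y = x ∨ y = η x
  iseqv := by
    refine ⟨fun x => .inl rfl, ?_, ?_⟩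
    · rintro x y (rfl | rfl)
      · exact .inl rfl
      · exact .inr (hη x).symm
    · rintro x y z (rfl | rfl) (rfl | rfl)
      · exact .inl rfl
      · exact .inr rfl
      · exact .inr rfl
      · exact .inl (hη x)

theorem orbitSetoid_mk_apply (hη : Involutive η) (x : W) :
    (⟦η x⟧ : Quotient hη.orbitSetoid) = ⟦x⟧ :=
  Quotient.sound (.inr (hη x).symm)

theorem out_eq_or_out_eq_apply (hη : Involutive η) (x : W) :
    (⟦x⟧ : Quotient hη.orbitSetoid).out = x ∨
      (⟦x⟧ : Quotient hη.orbitSetoid).out = η x := by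
  rcases Quotient.mk_out (s := hη.orbitSetoid) x with h | h
  · exact .inl h.symm
  · exact .inr ((congrArg η h).trans (hη _)).symm

open Classical in
noncomputable def equivProdBool (hη : Involutive η) (hne : ∀ x, η x ≠ x) :
    W ≃ Quotient hη.orbitSetoid × Bool where
  toFun x := (⟦x⟧, decide (x = (⟦x⟧ : Quotient hη.orbitSetoid).out))
  invFun p := if p.2 then p.1.out else η p.1.out
  left_inv x := by
    rcases hη.out_eq_or_out_eq_apply x with h | h
    · simp [h]
    · simp only [h, (hne x).symm, decide_false, hη x]
      simp
  right_inv := by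
    rintro ⟨c, _ | _⟩
    · simp [hη.orbitSetoid_mk_apply, hne]
    · simp

theorem equivProdBool_apply (hη : Involutive η) (hne : ∀ x, η x ≠ x) (x : W) :
    hη.equivProdBool hne (η x) = SignedGraph.eta (hη.equivProdBool hne x) := by
  simp only [equivProdBool, Equiv.coe_fn_mk, SignedGraph.eta]
  rw [hη.orbitSetoid_mk_apply]
  rcases hη.out_eq_or_out_eq_apply x with h | h
  · simp [h, hne x]
  · simp [h, (hne x).symm]

end Function.Involutive

namespace SignedGraph

variable {V : Type*}

theorem eta_involutive : Function.Involutive (eta : V × Bool → V × Bool) := fun x => by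
  simp [eta]

theorem isGrembanInvolution_eta (S : SignedGraph V) : S.gremban.IsGrembanInvolution eta where
  map_adj_iff x y := by simp [gremban, eta]
  involutive := eta_involutive
  apply_ne_self x h := by simpa [eta] using congrArg Prod.snd h
  ne_apply_of_adj {u v} huv h := S.G.loopless.irrefl u.1 (by simpa [h, eta] using huv.1)
  not_adj_apply_of_adj := by
    rintro ⟨p, a⟩ ⟨q, b⟩ huv h
    have := huv.2.trans h.2.symm
    cases a <;> cases b <;> simp [eta] at this

open Classical in
noncomputable def ofGrembanInvolution (H : SimpleGraph (V × Bool))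
    (hH : H.IsGrembanInvolution eta) : SignedGraph V where
  G.Adj u v := H.Adj (u, true) (v, true) ∨ H.Adj (u, true) (v, false)
  G.symm := ⟨fun u v h => h.elim (fun h => .inl h.symm) fun h =>
    .inr (by simpa [eta] using (hH.map_adj_iff (v, false) (u, true)).2 h.symm)⟩
  G.loopless := ⟨fun u h => h.elim (H.loopless.irrefl _) fun h => hH.ne_apply_of_adj h rfl⟩
  sign u v := if H.Adj (u, true) (v, true) then 1 else -1
  sign_symm u v := by simp only [H.adj_comm]
  sign_pm u v _ := by split_ifs <;> simp

theorem gremban_ofGrembanInvolution (H : SimpleGraph (V × Bool))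
    (hH : H.IsGrembanInvolution eta) : (ofGrembanInvolution H hH).gremban = H := by
  ext ⟨u, a⟩ ⟨v, b⟩
  have hflip : ∀ c, H.Adj (u, false) (v, c) ↔ H.Adj (u, true) (v, !c) := fun c => by
    simpa [eta] using (hH.map_adj_iff (u, false) (v, c)).symm
  have hexcl : H.Adj (u, true) (v, true) → ¬H.Adj (u, true) (v, false) :=
    hH.not_adj_apply_of_adj (v := (v, true))
  simp only [gremban, ofGrembanInvolution, ite_eq_left_iff, Int.reduceEq, imp_false, not_not]
  cases a <;> cases b <;> simp [hflip] <;> tauto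

end SignedGraph

open SignedGraph

/-- An unsigned graph `𝒢` is the Gremban expansion of some signed graph if and only if it
admits a fixed-point-free involutive automorphism `η` such that for every edge `(u,v)`
one has `v ≠ η(u)` and `(u, η(v))` is not an edge. -/
theorem gremban_characterization {W : Type} (𝒢 : SimpleGraph W) :
    (∃ (V : Type) (S : SignedGraph V), Nonempty (𝒢 ≃g S.gremban)) ↔
    ∃ η : W → W,
      Function.Bijective η ∧
      (∀ x y : W, 𝒢.Adj (η x) (η y) ↔ 𝒢.Adj x y) ∧
      (∀ x : W, η (η x) = x) ∧
      (∀ x : W, η x ≠ x) ∧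
      (∀ u v : W, 𝒢.Adj u v → v ≠ η u ∧ ¬𝒢.Adj u (η v)) := by
  constructor
  · rintro ⟨V, S, ⟨e⟩⟩
    have h : 𝒢.IsGrembanInvolution (fun x => e.symm (eta (e x))) :=
      (e.isGrembanInvolution_iff fun x => e.apply_symm_apply _).2 S.isGrembanInvolution_eta
    exact ⟨_, h.involutive.bijective, h.map_adj_iff, h.involutive, h.apply_ne_self,
      fun u v huv => ⟨h.ne_apply_of_adj huv, h.not_adj_apply_of_adj huv⟩⟩
  · rintro ⟨η, -, hadj, hinv, hne, hedge⟩
    have h : 𝒢.IsGrembanInvolution η :=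
      ⟨hadj, hinv, hne, fun huv => (hedge _ _ huv).1, fun huv => (hedge _ _ huv).2⟩
    let φ := SimpleGraph.Iso.map (h.involutive.equivProdBool hne) 𝒢
    have hH := (φ.isGrembanInvolution_iff (h.involutive.equivProdBool_apply hne)).1 h
    exact ⟨_, .ofGrembanInvolution _ hH, ⟨(gremban_ofGrembanInvolution _ hH).symm ▸ φ⟩⟩
end

section
/- Let G be a connected signed graph with Gremban-expanded transition matrix 𝒯 = [[K⁻¹A⁺, K⁻¹A⁻],[K⁻¹A⁻, K⁻¹A⁺]]. Then G is balanced if and only if the eigenspace of 𝒯 for eigenvalue 1 is two-dimensional, spanned by the all-ones vector 𝟙 ∈ ℝ^{2n} and the antisymmetric lift (ϑ, −ϑ)ᵀ, where ϑ = (θ(1),...,θ(n)) for a switching function θ that balances G. If G is unbalanced, the eigenvalue 1 of 𝒯 is simple with eigenvector 𝟙. -/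
open SignedGraph

namespace SignedGraph

variable {V : Type*} [Fintype V] [DecidableEq V]

open Classical in
/-- The signed adjacency matrix of a signed graph. -/
noncomputable def adjMat (S : SignedGraph V) : Matrix V V ℝ :=
  fun u v => if S.G.Adj u v then (S.sign u v : ℝ) else 0

/-- The positive part `A⁺ = max(A, 0)` of the signed adjacency matrix. -/
noncomputable def adjPos (S : SignedGraph V) : Matrix V V ℝ :=
  fun u v => max (S.adjMat u v) 0

/-- The negative part `A⁻ = max(−A, 0)` of the signed adjacency matrix. -/
noncomputable def adjNeg (S : SignedGraph V) : Matrix V V ℝ :=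
  fun u v => max (-S.adjMat u v) 0

/-- The Gremban adjacency matrix `𝒜 = [[A⁺, A⁻],[A⁻, A⁺]]`, which is the adjacency
matrix of the Gremban expansion. -/
noncomputable def grembanAdj (S : SignedGraph V) : Matrix (V ⊕ V) (V ⊕ V) ℝ :=
  Matrix.fromBlocks (S.adjPos) (S.adjNeg) (S.adjNeg) (S.adjPos)

/-- A signed graph is balanced if some switching function `θ : V → {±1}` makes all edge
signs positive. -/
def BalancedSw (S : SignedGraph V) : Prop :=
  ∃ θ : V → ℤ, (∀ v, θ v = 1 ∨ θ v = -1) ∧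
    ∀ u v, S.G.Adj u v → θ u * θ v * S.sign u v = 1

end SignedGraph

namespace SignedGraph

variable {V : Type*} [Fintype V] [DecidableEq V]

/-- The (unsigned) degree of a vertex: the row sum of `Ā = A⁺ + A⁻`. -/
noncomputable def deg (S : SignedGraph V) (v : V) : ℝ :=
  ∑ w, (S.adjPos v w + S.adjNeg v w)

/-- The Gremban-expanded transition matrix
`𝒯 = 𝒦⁻¹𝒜 = [[K⁻¹A⁺, K⁻¹A⁻],[K⁻¹A⁻, K⁻¹A⁺]]`. -/
noncomputable def grembanTrans (S : SignedGraph V) : Matrix (V ⊕ V) (V ⊕ V) ℝ :=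
  Matrix.diagonal (Sum.elim (fun v => (S.deg v)⁻¹) (fun v => (S.deg v)⁻¹)) *
    S.grembanAdj

end SignedGraph


/-!
For a real symmetric matrix `B` with absolute row sums `D`, the quadratic form of `D - B` is
`½ ∑ᵢⱼ (|Bᵢⱼ| fᵢ² - 2 Bᵢⱼ fᵢ fⱼ + |Bᵢⱼ| fⱼ²)`, a sum of nonnegative terms; hence `B f = D f`
forces `|Bᵢⱼ| fᵢ = Bᵢⱼ fⱼ` for all `i, j`. Adding and subtracting the two block rows of
`𝒜 x = 𝒦 x` for `x = (x₊, x₋)` shows that `x` is a `1`-eigenvector of `𝒯` iff `x₊ + x₋`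
is constant along edges and `d = x₊ - x₋` satisfies `d u = σ(uv) d v` along edges.
On a connected graph the first function is constant, and `|d|` is constant: either `d = 0`,
or the signs of `d` form a balancing switching `θ` and `d` is a multiple of `θ`.
-/

open Matrix

theorem abs_mul_sq_sub_two_mul_add_abs_mul_sq_nonneg (b x y : ℝ) :
    0 ≤ |b| * x ^ 2 - 2 * (b * x * y) + |b| * y ^ 2 := by
  have h : b * x * y ≤ |b| * (|x| * |y|) := by
    rw [← abs_mul, ← abs_mul, ← mul_assoc]
    exact le_abs_self _
  nlinarith [two_mul_le_add_sq |x| |y|, sq_abs x, sq_abs y, abs_nonneg b]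

namespace Matrix

variable {n : Type*} [Fintype n] {B : Matrix n n ℝ}

theorem IsSymm.sum_sum_abs_mul_sq_sub_two_mul_add (hB : B.IsSymm) (f : n → ℝ) :
    ∑ i, ∑ j, (|B i j| * f i ^ 2 - 2 * (B i j * f i * f j) + |B i j| * f j ^ 2) =
      2 * ∑ i, f i * ((∑ j, |B i j|) * f i - (B *ᵥ f) i) := by
  have hcol : ∑ i, ∑ j, |B i j| * f j ^ 2 = ∑ i, ∑ j, |B i j| * f i ^ 2 := by
    rw [Finset.sum_comm]
    simp only [hB.apply]
  have hrow : ∀ i, ∑ j, B i j * f i * f j = f i * (B *ᵥ f) i := fun i => by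
    rw [mulVec, dotProduct, Finset.mul_sum]
    exact Finset.sum_congr rfl fun j _ => by ring
  have hdiag : ∀ i, f i * ((∑ j, |B i j|) * f i) = (∑ j, |B i j|) * f i ^ 2 := fun i => by ring
  simp only [Finset.sum_add_distrib, Finset.sum_sub_distrib, ← Finset.mul_sum, hrow, hcol,
    ← Finset.sum_mul, mul_sub, hdiag]
  ring

theorem IsSymm.mulVec_eq_absRowSum_mul_iff (hB : B.IsSymm) {f : n → ℝ} :
    (B *ᵥ f = fun i => (∑ j, |B i j|) * f i) ↔ ∀ i j, |B i j| * f i = B i j * f j := by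
  refine ⟨fun hf i j => ?_, fun h => funext fun i => ?_⟩
  · have hsum := hB.sum_sum_abs_mul_sq_sub_two_mul_add f
    simp only [hf, sub_self, mul_zero, Finset.sum_const_zero] at hsum
    have hterm := abs_mul_sq_sub_two_mul_add_abs_mul_sq_nonneg
    have hij := (Finset.sum_eq_zero_iff_of_nonneg fun j _ => hterm _ _ _).1
      ((Finset.sum_eq_zero_iff_of_nonneg fun i _ => Finset.sum_nonneg fun j _ => hterm _ _ _).1
        hsum i (Finset.mem_univ i)) j (Finset.mem_univ j)
    have hsq : (|B i j| * f i - B i j * f j) ^ 2 = 0 := by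
      linear_combination |B i j| * hij - f j ^ 2 * sq_abs (B i j)
    linarith [pow_eq_zero_iff (n := 2) two_ne_zero |>.1 hsq]
  · simp only [mulVec, dotProduct, Finset.sum_mul]
    exact Finset.sum_congr rfl fun j _ => (h i j).symm

end Matrix

theorem SimpleGraph.Preconnected.apply_eq_of_forall_adj {V α : Type*} {G : SimpleGraph V}
    (hG : G.Preconnected) {f : V → α} (hf : ∀ u v, G.Adj u v → f u = f v) (u v : V) :
    f u = f v := by
  obtain ⟨p⟩ := hG u v
  induction p with
  | nil => rfl
  | cons h _ ih => exact (hf _ _ h).trans ih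

theorem linearIndependent_one_sumElim_neg {V : Type*} {φ : V → ℝ} {v₀ : V} (h : φ v₀ ≠ 0) :
    LinearIndependent ℝ ![(1 : V ⊕ V → ℝ), Sum.elim φ (-φ)] := by
  refine LinearIndependent.pair_iff.2 fun s t hst => ?_
  have hl := congrFun hst (Sum.inl v₀)
  have hr := congrFun hst (Sum.inr v₀)
  simp only [Pi.add_apply, Pi.smul_apply, Pi.one_apply, Sum.elim_inl, Sum.elim_inr, Pi.neg_apply,
    smul_eq_mul, Pi.zero_apply] at hl hr
  have ht : t * φ v₀ = 0 := by linarith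
  exact ⟨by linarith, (mul_eq_zero.1 ht).resolve_right h⟩

namespace SignedGraph

variable {V : Type*} (S : SignedGraph V)

theorem adjMat_of_adj {u v : V} (h : S.G.Adj u v) : S.adjMat u v = S.sign u v := by
  simp [adjMat, h]

theorem adjMat_of_not_adj {u v : V} (h : ¬S.G.Adj u v) : S.adjMat u v = 0 := by
  simp [adjMat, h]

theorem sign_mul_sign_of_adj {u v : V} (h : S.G.Adj u v) :
    (S.sign u v : ℝ) * S.sign u v = 1 := by
  rcases S.sign_pm u v h with hs | hs <;> simp [hs]

theorem abs_adjMat_of_adj {u v : V} (h : S.G.Adj u v) : |S.adjMat u v| = 1 := by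
  rcases S.sign_pm u v h with hs | hs <;> simp [S.adjMat_of_adj h, hs]

theorem adjMat_isSymm : S.adjMat.IsSymm := by
  ext u v
  simp only [Matrix.transpose_apply, adjMat, S.sign_symm v u]
  rw [S.G.adj_comm]

theorem adjPos_sub_adjNeg : S.adjPos - S.adjNeg = S.adjMat := by
  ext u v
  exact max_zero_sub_max_neg_zero_eq_self _

theorem adjPos_add_adjNeg : S.adjPos + S.adjNeg = S.adjMat.map abs := by
  ext u v
  exact max_zero_add_max_neg_zero_eq_abs_self _

def RespectsSigns (d : V → ℝ) : Prop :=
  ∀ u v, S.G.Adj u v → d u = S.sign u v * d v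

variable {S}

theorem RespectsSigns.smul {d : V → ℝ} (hd : S.RespectsSigns d) (t : ℝ) :
    S.RespectsSigns (t • d) := fun u v h => by
  simp only [Pi.smul_apply, smul_eq_mul, hd u v h]
  ring

theorem respectsSigns_zero : S.RespectsSigns 0 := fun u v _ => by simp

variable (S)

theorem respectsSigns_iff_balancing {θ : V → ℤ} (hθ : ∀ v, θ v = 1 ∨ θ v = -1) :
    S.RespectsSigns (fun v => (θ v : ℝ)) ↔ ∀ u v, S.G.Adj u v → θ u * θ v * S.sign u v = 1 := by
  refine forall_congr' fun u => forall_congr' fun v => imp_congr_right fun h => ?_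
  rcases hθ u with hu | hu <;> rcases hθ v with hv | hv <;> rcases S.sign_pm u v h with hs | hs <;>
    simp [hu, hv, hs] <;> norm_num

variable {S}

theorem RespectsSigns.exists_eq_smul {d : V → ℝ} (hd : S.RespectsSigns d) (hconn : S.G.Connected)
    {θ : V → ℝ} (hθ : ∀ v, θ v * θ v = 1) (hθS : S.RespectsSigns θ) :
    ∃ t : ℝ, d = t • θ := by
  obtain ⟨v₀⟩ := hconn.nonempty
  have hconst := hconn.preconnected.apply_eq_of_forall_adj (f := fun v => θ v * d v)
    fun u v h => by
      simp only [hθS u v h, hd u v h]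
      linear_combination (θ v * d v) * S.sign_mul_sign_of_adj h
  refine ⟨θ v₀ * d v₀, funext fun v => ?_⟩
  rw [Pi.smul_apply, smul_eq_mul, ← hconst v v₀]
  linear_combination -d v * hθ v

theorem RespectsSigns.balancedSw (hconn : S.G.Preconnected) {d : V → ℝ}
    (hd : S.RespectsSigns d) {v₀ : V} (h₀ : d v₀ ≠ 0) : S.BalancedSw := by
  have habs := hconn.apply_eq_of_forall_adj (f := fun v => |d v|) fun u v h => by
    rcases S.sign_pm u v h with hs | hs <;> simp [hd u v h, hs]
  set θ : V → ℤ := fun v => if 0 < d v then 1 else -1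
  have hθ v : θ v = 1 ∨ θ v = -1 := by by_cases h : 0 < d v <;> simp [θ, h]
  have hdθ v : d v = |d v₀| * θ v := by
    rw [← habs v v₀]
    by_cases h : 0 < d v
    · simp [θ, h, abs_of_pos h]
    · simp [θ, h, abs_of_nonpos (not_lt.1 h)]
  refine ⟨θ, hθ, (S.respectsSigns_iff_balancing hθ).1 fun u v h => ?_⟩
  have huv := hd u v h
  rw [hdθ u, hdθ v] at huv
  exact mul_left_cancel₀ (abs_pos.2 h₀).ne' (by linear_combination huv)

variable (S) [Fintype V]

theorem deg_eq_sum_abs_adjMat (v : V) : S.deg v = ∑ w, |S.adjMat v w| := by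
  simp only [deg, ← Matrix.add_apply, adjPos_add_adjNeg, Matrix.map_apply]

theorem adjMat_mulVec_eq_deg_mul_iff {d : V → ℝ} :
    (S.adjMat *ᵥ d = fun v => S.deg v * d v) ↔ S.RespectsSigns d := by
  simp only [deg_eq_sum_abs_adjMat, S.adjMat_isSymm.mulVec_eq_absRowSum_mul_iff]
  refine forall_congr' fun u => forall_congr' fun v => ?_
  by_cases h : S.G.Adj u v
  · rw [S.abs_adjMat_of_adj h, S.adjMat_of_adj h, one_mul]
    exact ⟨fun huv _ => huv, fun huv => huv h⟩
  · simp [h, S.adjMat_of_not_adj h]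

theorem absAdjMat_mulVec_eq_deg_mul_iff {s : V → ℝ} :
    (S.adjMat.map abs *ᵥ s = fun v => S.deg v * s v) ↔ ∀ u v, S.G.Adj u v → s u = s v := by
  have hsymm : (S.adjMat.map abs).IsSymm := S.adjMat_isSymm.map abs
  have hdeg v : S.deg v = ∑ w, |S.adjMat.map abs v w| := by
    simp only [Matrix.map_apply, abs_abs, deg_eq_sum_abs_adjMat]
  simp only [hdeg]
  rw [hsymm.mulVec_eq_absRowSum_mul_iff]
  simp only [Matrix.map_apply, abs_abs]
  refine forall_congr' fun u => forall_congr' fun v => ?_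
  by_cases h : S.G.Adj u v
  · rw [S.abs_adjMat_of_adj h, one_mul, one_mul]
    exact ⟨fun huv _ => huv, fun huv => huv h⟩
  · simp [h, S.adjMat_of_not_adj h]

variable [DecidableEq V]

theorem grembanTrans_mulVec_eq_self_iff (hdeg : ∀ v, 0 < S.deg v) (x : V ⊕ V → ℝ) :
    S.grembanTrans *ᵥ x = x ↔
      (∀ u v, S.G.Adj u v → x (.inl u) + x (.inr u) = x (.inl v) + x (.inr v)) ∧
        S.RespectsSigns fun v => x (.inl v) - x (.inr v) := by
  have hblocks : S.grembanTrans *ᵥ x = x ↔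
      (S.adjPos *ᵥ (x ∘ .inl) + S.adjNeg *ᵥ (x ∘ .inr) = fun v => S.deg v * x (.inl v)) ∧
      (S.adjNeg *ᵥ (x ∘ .inl) + S.adjPos *ᵥ (x ∘ .inr) = fun v => S.deg v * x (.inr v)) := by
    rw [grembanTrans, ← mulVec_mulVec, funext_iff, Sum.forall, funext_iff, funext_iff]
    simp only [mulVec_diagonal, grembanAdj, fromBlocks_mulVec, Sum.elim_inl, Sum.elim_inr,
      inv_mul_eq_iff_eq_mul₀ (hdeg _).ne']
  rw [hblocks, ← S.absAdjMat_mulVec_eq_deg_mul_iff, ← S.adjMat_mulVec_eq_deg_mul_iff,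
    show (fun v => x (.inl v) + x (.inr v)) = x ∘ .inl + x ∘ .inr from rfl,
    show (fun v => x (.inl v) - x (.inr v)) = x ∘ .inl - x ∘ .inr from rfl,
    ← adjPos_add_adjNeg, ← adjPos_sub_adjNeg]
  simp only [add_mulVec, sub_mulVec, mulVec_add, mulVec_sub, funext_iff, Pi.add_apply,
    Pi.sub_apply, ← forall_and]
  exact forall_congr' fun v =>
    ⟨fun h => ⟨by linarith [h.1, h.2], by linarith⟩, fun h => ⟨by linarith, by linarith⟩⟩

theorem mem_ker_grembanTrans_sub_id_iff (hconn : S.G.Connected) (hdeg : ∀ v, 0 < S.deg v)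
    (x : V ⊕ V → ℝ) :
    x ∈ LinearMap.ker (S.grembanTrans.mulVecLin - LinearMap.id) ↔
      ∃ (c : ℝ) (d : V → ℝ), S.RespectsSigns d ∧ x = c • 1 + Sum.elim d (-d) := by
  rw [LinearMap.mem_ker, LinearMap.sub_apply, mulVecLin_apply, LinearMap.id_apply, sub_eq_zero,
    S.grembanTrans_mulVec_eq_self_iff hdeg]
  constructor
  · rintro ⟨hs, hd⟩
    obtain ⟨v₀⟩ := hconn.nonempty
    have hconst := hconn.preconnected.apply_eq_of_forall_adj hs
    refine ⟨(x (.inl v₀) + x (.inr v₀)) / 2, (1 / 2 : ℝ) • fun v => x (.inl v) - x (.inr v),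
      hd.smul _, ?_⟩
    ext (v | v) <;>
      simp only [one_div, Pi.add_apply, Pi.smul_apply, Pi.one_apply, Pi.neg_apply, smul_eq_mul,
        mul_one, Sum.elim_inl, Sum.elim_inr] <;>
      linarith [hconst v v₀]
  · rintro ⟨c, d, hd, rfl⟩
    refine ⟨fun u v _ => by simp only [Pi.add_apply, Pi.smul_apply, Pi.one_apply, Sum.elim_inl,
      Sum.elim_inr, Pi.neg_apply, smul_eq_mul]; ring, ?_⟩
    convert hd.smul 2 using 1
    ext v
    simp only [Pi.add_apply, Pi.smul_apply, Pi.one_apply, Pi.neg_apply, smul_eq_mul, Sum.elim_inl,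
      Sum.elim_inr]
    ring

theorem ker_grembanTrans_sub_id_of_balancing (hconn : S.G.Connected) (hdeg : ∀ v, 0 < S.deg v)
    {θ : V → ℤ} (hθ : ∀ v, θ v = 1 ∨ θ v = -1)
    (hbal : ∀ u v, S.G.Adj u v → θ u * θ v * S.sign u v = 1) :
    LinearMap.ker (S.grembanTrans.mulVecLin - LinearMap.id) =
      Submodule.span ℝ {1, Sum.elim (fun v => (θ v : ℝ)) (fun v => -(θ v : ℝ))} := by
  have hθS := (S.respectsSigns_iff_balancing hθ).2 hbal
  have hθsq v : (θ v : ℝ) * θ v = 1 := by rcases hθ v with h | h <;> simp [h]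
  ext x
  rw [S.mem_ker_grembanTrans_sub_id_iff hconn hdeg, Submodule.mem_span_pair]
  constructor
  · rintro ⟨c, d, hd, rfl⟩
    obtain ⟨t, rfl⟩ := hd.exists_eq_smul hconn hθsq hθS
    exact ⟨c, t, by ext (v | v) <;> simp⟩
  · rintro ⟨a, b, rfl⟩
    exact ⟨a, b • fun v => (θ v : ℝ), hθS.smul b, by ext (v | v) <;> simp⟩

theorem ker_grembanTrans_sub_id_of_not_balancedSw (hconn : S.G.Connected)
    (hdeg : ∀ v, 0 < S.deg v) (hnb : ¬S.BalancedSw) :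
    LinearMap.ker (S.grembanTrans.mulVecLin - LinearMap.id) = Submodule.span ℝ {1} := by
  ext x
  rw [S.mem_ker_grembanTrans_sub_id_iff hconn hdeg, Submodule.mem_span_singleton]
  constructor
  · rintro ⟨c, d, hd, rfl⟩
    have hd0 : d = 0 := funext fun v => by_contra fun h => hnb (hd.balancedSw hconn.preconnected h)
    exact ⟨c, by simp [hd0]⟩
  · rintro ⟨c, rfl⟩
    exact ⟨c, 0, respectsSigns_zero, by simp⟩

end SignedGraph

/-- For a connected signed graph `G` (with positive degrees), `G` is balanced if and
only if the eigenspace of the Gremban-expanded transition matrix `𝒯` for the eigenvalue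
`1` is two-dimensional, spanned by the all-ones vector `𝟙` and the antisymmetric lift
`(ϑ, −ϑ)ᵀ` of a switching function `θ` that balances `G`.  If `G` is unbalanced, the
eigenvalue `1` is simple, with eigenspace spanned by `𝟙`. -/
theorem gremban_transition_unit_eigenspace {V : Type*} [Fintype V] [DecidableEq V]
    (S : SignedGraph V) (hconn : S.G.Connected) (hdeg : ∀ v, 0 < S.deg v) :
    (S.BalancedSw ↔
      ∃ θ : V → ℤ, (∀ v, θ v = 1 ∨ θ v = -1) ∧
        (∀ u v, S.G.Adj u v → θ u * θ v * S.sign u v = 1) ∧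
        LinearMap.ker ((S.grembanTrans).mulVecLin - LinearMap.id) =
          Submodule.span ℝ
            {(1 : V ⊕ V → ℝ),
             Sum.elim (fun v => (θ v : ℝ)) (fun v => -(θ v : ℝ))} ∧
        Module.finrank ℝ
          (LinearMap.ker ((S.grembanTrans).mulVecLin - LinearMap.id)) = 2) ∧
    (¬S.BalancedSw →
      LinearMap.ker ((S.grembanTrans).mulVecLin - LinearMap.id) =
        Submodule.span ℝ {(1 : V ⊕ V → ℝ)}) := by
  refine ⟨⟨fun ⟨θ, hθ, hbal⟩ => ?_, fun ⟨θ, hθ, hbal, _⟩ => ⟨θ, hθ, hbal⟩⟩,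
    S.ker_grembanTrans_sub_id_of_not_balancedSw hconn hdeg⟩
  have hker := S.ker_grembanTrans_sub_id_of_balancing hconn hdeg hθ hbal
  obtain ⟨v₀⟩ := hconn.nonempty
  have hli := linearIndependent_one_sumElim_neg (φ := fun v => (θ v : ℝ)) (v₀ := v₀)
    (by rcases hθ v₀ with h | h <;> simp [h])
  refine ⟨θ, hθ, hbal, hker, ?_⟩
  rw [hker, ← Matrix.range_cons_cons_empty _ _ ![]]
  exact (finrank_span_eq_card hli).trans (Fintype.card_fin 2)
end
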